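/- Let m, n be coprime positive integers, γ an (m,n)-Dyck path, γ* the rugged (m+n,n)-Dyck path obtained by inserting a horizontal step after each vertical step, and ι: O(γ) → O(γ*) the induced injection on step-pairs. Then Σ_{p ∈ V(γ*)} k₁(p) = |H₁(γ*) \ ι(O(γ))|, where for an outer vertex p of γ*, k₁(p) is the number of vertical steps occurring after p in γ* intersected by the line of slope n/(m+n) through p, and H₁(γ*) is the set of pairs (r_h, r_v) ∈ O(γ*) such that the line of slope n/(m+n) through the left endpoint of r_h intersects r_v. -/

import Mathlib

open scoped Classical
open Finset

/-- A lattice path is encoded as a list of steps: `false` = horizontal step `(1,0)`,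
`true` = vertical step `(0,1)`.  `IsDyck m n w` says `w` is an `(m,n)`-Dyck path:
it has `m` horizontal and `n` vertical steps and every intermediate lattice point
`(x,y)` satisfies `n*x ≤ m*y` (the path stays weakly above the diagonal `y=(n/m)x`). -/
def IsDyck (m n : ℕ) (w : List Bool) : Prop :=
  w.count false = m ∧ w.count true = n ∧
    ∀ p ∈ w.inits, n * p.count false ≤ m * p.count true

/-- `x`-coordinate of the point of the path reached after the first `i` steps. -/
def ptX (w : List Bool) (i : ℕ) : ℤ := ((w.take i).count false : ℤ)

/-- `y`-coordinate of the point of the path reached after the first `i` steps. -/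
def ptY (w : List Bool) (i : ℕ) : ℤ := ((w.take i).count true : ℤ)

/-- `O(γ)`: pairs `(i,j)` of a horizontal step `i` and a vertical step `j`
appearing later in the path. -/
def Opairs (w : List Bool) : Finset (ℕ × ℕ) :=
  (Finset.range w.length ×ˢ Finset.range w.length).filter
    (fun ij => ij.1 < ij.2 ∧ w[ij.1]? = some false ∧ w[ij.2]? = some true)

/-- The set of (bottom-left corners of) complete unit lattice squares lying between the
path and the diagonal `y = (n/m)x`: the square `[x,x+1]×[y,y+1]` lies weakly above the
diagonal and strictly below the path. -/
noncomputable def areaSet (m n : ℕ) (w : List Bool) : Finset (ℕ × ℕ) :=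
  ((Finset.range m) ×ˢ (Finset.range n)).filter (fun xy =>
    n * (xy.1 + 1) ≤ m * xy.2 ∧
    ∃ i < w.length, w[i]? = some false ∧
      (w.take (i+1)).count false = xy.1 + 1 ∧ xy.2 + 1 ≤ (w.take (i+1)).count true)

/-- `area(γ)`: the number of complete unit lattice squares between the path and the
diagonal. -/
noncomputable def area (m n : ℕ) (w : List Bool) : ℕ := (areaSet m n w).card

/-- Some line of slope `n/m` (i.e. `{(x,y) | n*x - m*y = c}`) meets both the closed
horizontal step segment `i` and the closed vertical step segment `j`. -/
def MeetsBoth (m n : ℕ) (w : List Bool) (i j : ℕ) : Prop :=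
  ∃ c : ℝ,
    (∃ x : ℝ, (ptX w i : ℝ) ≤ x ∧ x ≤ (ptX w i : ℝ) + 1 ∧
      (n : ℝ) * x - (m : ℝ) * (ptY w i : ℝ) = c) ∧
    (∃ y : ℝ, (ptY w j : ℝ) ≤ y ∧ y ≤ (ptY w j : ℝ) + 1 ∧
      (n : ℝ) * (ptX w j : ℝ) - (m : ℝ) * y = c)

/-- Condition (1A): the line of slope `n/m` through the left endpoint `(a-1,b)` of the
horizontal step `i` meets the closed vertical step segment `j`. -/
def Cond1A (m n : ℕ) (w : List Bool) (i j : ℕ) : Prop :=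
  ∃ y : ℝ, (ptY w j : ℝ) ≤ y ∧ y ≤ (ptY w j : ℝ) + 1 ∧
    (n : ℝ) * ((ptX w j : ℝ) - (ptX w i : ℝ)) = (m : ℝ) * (y - (ptY w i : ℝ))

/-- Condition (2A): the line of slope `n/m` through the top endpoint `(a',b'+1)` of the
vertical step `j` meets the closed horizontal step segment `i`. -/
def Cond2A (m n : ℕ) (w : List Bool) (i j : ℕ) : Prop :=
  ∃ x : ℝ, (ptX w i : ℝ) ≤ x ∧ x ≤ (ptX w i : ℝ) + 1 ∧
    (n : ℝ) * (x - (ptX w j : ℝ)) = (m : ℝ) * ((ptY w i : ℝ) - ((ptY w j : ℝ) + 1))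

/-- `H(γ)`: pairs in `O(γ)` admitting a common transversal line parallel to the
diagonal. -/
noncomputable def Hpairs (m n : ℕ) (w : List Bool) : Finset (ℕ × ℕ) :=
  (Opairs w).filter (fun ij => MeetsBoth m n w ij.1 ij.2)

/-- `H₁(γ)`: pairs in `O(γ)` satisfying condition (1A). -/
noncomputable def H1pairs (m n : ℕ) (w : List Bool) : Finset (ℕ × ℕ) :=
  (Opairs w).filter (fun ij => Cond1A m n w ij.1 ij.2)

/-- `H₂(γ)`: pairs in `O(γ)` satisfying condition (2A). -/
noncomputable def H2pairs (m n : ℕ) (w : List Bool) : Finset (ℕ × ℕ) :=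
  (Opairs w).filter (fun ij => Cond2A m n w ij.1 ij.2)

/-- The line of slope `n/m` through the point `(px,py)` meets the closed segment of the
horizontal step `i`. -/
def lineHitsH (m n : ℕ) (w : List Bool) (px py : ℤ) (i : ℕ) : Prop :=
  w[i]? = some false ∧
    ∃ x : ℝ, (ptX w i : ℝ) ≤ x ∧ x ≤ (ptX w i : ℝ) + 1 ∧
      (n : ℝ) * (x - (px : ℝ)) = (m : ℝ) * ((ptY w i : ℝ) - (py : ℝ))

/-- The line of slope `n/m` through the point `(px,py)` meets the closed segment of the
vertical step `j`. -/
def lineHitsV (m n : ℕ) (w : List Bool) (px py : ℤ) (j : ℕ) : Prop :=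
  w[j]? = some true ∧
    ∃ y : ℝ, (ptY w j : ℝ) ≤ y ∧ y ≤ (ptY w j : ℝ) + 1 ∧
      (n : ℝ) * ((ptX w j : ℝ) - (px : ℝ)) = (m : ℝ) * (y - (py : ℝ))

/-- Outer vertices of the path, encoded by the index `j` of a vertical step that is
immediately followed by a horizontal step; the vertex itself is the point
`(ptX w (j+1), ptY w (j+1))`. -/
def outerIdx (w : List Bool) : Finset ℕ :=
  (Finset.range w.length).filter
    (fun j => w[j]? = some true ∧ w[j+1]? = some false)

/-- The perpendicular distance from the diagonal of the outer vertex indexed by `j`,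
measured by `m*y - n*x` (proportional to the true distance). -/
def diagDist (m n : ℕ) (w : List Bool) (j : ℕ) : ℤ :=
  (m : ℤ) * ptY w (j+1) - (n : ℤ) * ptX w (j+1)

/-- `V(γ)`: outer vertices other than one farthest from the diagonal. -/
def Vset (m n : ℕ) (w : List Bool) : Finset ℕ :=
  (outerIdx w).filter (fun j => ∃ j' ∈ outerIdx w, diagDist m n w j < diagDist m n w j')

/-- `k(p)`: the number of horizontal steps of the path, other than the horizontal step
starting at the outer vertex `p` (indexed by `j`), met by the line of slope `n/m`
through `p`. -/
noncomputable def kH (m n : ℕ) (w : List Bool) (j : ℕ) : ℕ :=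
  ((Finset.range w.length).filter
    (fun i => i ≠ j + 1 ∧ lineHitsH m n w (ptX w (j+1)) (ptY w (j+1)) i)).card

/-- The number of vertical steps of the path, other than the vertical step ending at the
outer vertex `p` (indexed by `j`), met by the line of slope `n/m` through `p`. -/
noncomputable def kV (m n : ℕ) (w : List Bool) (j : ℕ) : ℕ :=
  ((Finset.range w.length).filter
    (fun i => i ≠ j ∧ lineHitsV m n w (ptX w (j+1)) (ptY w (j+1)) i)).card

/-- `k₁(p)`: the number of vertical steps occurring after the outer vertex `p`
(indexed by `j`) met by the line of slope `n/m` through `p`. -/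
noncomputable def k1 (m n : ℕ) (w : List Bool) (j : ℕ) : ℕ :=
  ((Finset.range w.length).filter
    (fun i => j < i ∧ lineHitsV m n w (ptX w (j+1)) (ptY w (j+1)) i)).card

/-- `k₂(p)`: the number of horizontal steps occurring before the outer vertex `p`
(indexed by `j`) met by the line of slope `n/m` through `p`. -/
noncomputable def k2 (m n : ℕ) (w : List Bool) (j : ℕ) : ℕ :=
  ((Finset.range w.length).filter
    (fun i => i ≤ j ∧ lineHitsH m n w (ptX w (j+1)) (ptY w (j+1)) i)).card

/-- The insertion map `γ ↦ γ*`: insert one horizontal step immediately after each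
vertical step. -/
def star : List Bool → List Bool
  | [] => []
  | true :: w => true :: false :: star w
  | false :: w => false :: star w

/-- The index in `γ*` of the step corresponding to the step of index `i` in `γ`. -/
def starIdx (w : List Bool) (i : ℕ) : ℕ := i + (w.take i).count true

/-- A Dyck path is rugged if every vertical step is immediately followed by a
horizontal step. -/
def Rugged (w : List Bool) : Prop :=
  ∀ i, w[i]? = some true → w[i+1]? = some false

/-!
Every vertical step of `γ*` is followed by an inserted horizontal step, so the outer vertices
of `γ*` are exactly the top endpoints of its vertical steps, and the horizontal steps of `γ*`
not coming from `γ` are exactly those starting at an outer vertex. A pair of `H₁(γ*)` outside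
`ι(O(γ))` is therefore an inserted horizontal step at an outer vertex `p` together with a later
vertical step met by the line through `p`; grouping these pairs by `p` gives `Σ_p k₁(p)`, summed
over all outer vertices. The farthest outer vertex contributes nothing: a vertical step met by
the line through `p` ends at an outer vertex at least as far from the diagonal as `p`, and by
coprimality of `m + n` and `n` two distinct outer vertices are never equally far.
-/

section Lattice

variable {v : List Bool}

lemma lt_length_of_getElem?_eq_some {i : ℕ} {b : Bool} (h : v[i]? = some b) : i < v.length :=
  (List.getElem?_eq_some_iff.1 h).1

lemma ptX_succ_of_true {i : ℕ} (h : v[i]? = some true) : ptX v (i + 1) = ptX v i := by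
  simp [ptX, List.take_add_one, h]

lemma ptY_succ_of_true {i : ℕ} (h : v[i]? = some true) : ptY v (i + 1) = ptY v i + 1 := by
  simp [ptY, List.take_add_one, h]

lemma ptX_add_one_le_count {i : ℕ} (h : v[i]? = some false) :
    ptX v i + 1 ≤ v.count false := by
  have hle : (v.take (i + 1)).count false ≤ v.count false := (List.take_sublist _ _).count_le _
  simp [ptX, List.take_add_one, h] at hle ⊢
  omega

lemma ptX_add_ptY {i : ℕ} (hi : i ≤ v.length) : ptX v i + ptY v i = i := by
  have hsum := (v.take i).count_false_add_count_true
  simp only [List.length_take, hi, min_eq_left] at hsum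
  simp only [ptX, ptY]
  omega

lemma mem_outerIdx {j : ℕ} : j ∈ outerIdx v ↔ v[j]? = some true ∧ v[j + 1]? = some false := by
  simp only [outerIdx, mem_filter, mem_range, and_iff_right_iff_imp]
  exact fun h => lt_length_of_getElem?_eq_some h.1

lemma mem_outerIdx_of_rugged (hv : Rugged v) {j : ℕ} (h : v[j]? = some true) :
    j ∈ outerIdx v :=
  mem_outerIdx.2 ⟨h, hv j h⟩

end Lattice

section Star

@[simp] lemma star_nil : star [] = [] := rfl

@[simp] lemma star_cons_true (w : List Bool) : star (true :: w) = true :: false :: star w := rfl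

@[simp] lemma star_cons_false (w : List Bool) : star (false :: w) = false :: star w := rfl

lemma count_false_star (w : List Bool) :
    (star w).count false = w.count false + w.count true := by
  induction w with
  | nil => rfl
  | cons b t ih =>
    have := t.count_false_add_count_true
    cases b <;> simp [ih] <;> omega

lemma rugged_star (w : List Bool) : Rugged (star w) := by
  induction w with
  | nil => simp [Rugged]
  | cons b t ih =>
    rintro (_ | _ | i) h <;> cases b <;> simp_all [Rugged]

@[simp] lemma starIdx_zero (w : List Bool) : starIdx w 0 = 0 := rfl

lemma starIdx_cons_false (w : List Bool) (i : ℕ) :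
    starIdx (false :: w) (i + 1) = starIdx w i + 1 := by
  simp [starIdx]; omega

lemma starIdx_cons_true (w : List Bool) (i : ℕ) :
    starIdx (true :: w) (i + 1) = starIdx w i + 2 := by
  simp [starIdx]; omega

lemma starIdx_succ_of_true {w : List Bool} {i : ℕ} (h : w[i]? = some true) :
    starIdx w (i + 1) = starIdx w i + 2 := by
  simp [starIdx, List.take_add_one, h]; omega

lemma starIdx_strictMono (w : List Bool) : StrictMono (starIdx w) :=
  strictMono_nat_of_lt_succ fun i => by
    have := ((List.take_prefix_take_left (l := w) (Nat.le_add_right i 1)).sublist).count_le true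
    unfold starIdx; omega

lemma getElem?_star_starIdx (w : List Bool) (i : ℕ) : (star w)[starIdx w i]? = w[i]? := by
  induction w generalizing i with
  | nil => simp [starIdx]
  | cons b t ih =>
    cases b <;> cases i <;> simp [starIdx_cons_false, starIdx_cons_true, ih]

lemma getElem?_star_starIdx_add_one {w : List Bool} {i : ℕ} (h : w[i]? = some true) :
    (star w)[starIdx w i + 1]? = some false := by
  induction w generalizing i with
  | nil => simp at h
  | cons b t ih =>
    cases b <;> cases i <;> simp_all [starIdx_cons_false, starIdx_cons_true]

lemma eq_starIdx_or_eq_starIdx_add_one {w : List Bool} {k : ℕ} (hk : k < (star w).length) :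
    (∃ i, k = starIdx w i) ∨ ∃ i, w[i]? = some true ∧ k = starIdx w i + 1 := by
  induction w generalizing k with
  | nil => simp at hk
  | cons b t ih =>
    cases b with
    | false =>
      rcases k with _ | k
      · exact .inl ⟨0, rfl⟩
      rcases ih (k := k) (by simpa using hk) with ⟨i, rfl⟩ | ⟨i, hi, rfl⟩
      · exact .inl ⟨i + 1, (starIdx_cons_false t i).symm⟩
      · exact .inr ⟨i + 1, hi, by rw [starIdx_cons_false]⟩
    | true =>
      rcases k with _ | _ | k
      · exact .inl ⟨0, rfl⟩
      · exact .inr ⟨0, rfl, rfl⟩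
      rcases ih (k := k) (by simpa using hk) with ⟨i, rfl⟩ | ⟨i, hi, rfl⟩
      · exact .inl ⟨i + 1, (starIdx_cons_true t i).symm⟩
      · exact .inr ⟨i + 1, hi, by rw [starIdx_cons_true]⟩

lemma starIdx_ne_add_one_of_getElem?_star {w : List Bool} {i j : ℕ}
    (hj : (star w)[j]? = some true) : starIdx w i ≠ j + 1 := by
  rcases eq_starIdx_or_eq_starIdx_add_one (lt_length_of_getElem?_eq_some hj)
    with ⟨q, rfl⟩ | ⟨q, hq, rfl⟩
  · rw [getElem?_star_starIdx] at hj
    have hmono := starIdx_strictMono w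
    rcases le_or_gt i q with hiq | hqi
    · have := hmono.monotone hiq; omega
    · have := hmono.monotone (Nat.succ_le_of_lt hqi)
      rw [starIdx_succ_of_true hj] at this; omega
  · simp [getElem?_star_starIdx_add_one hq] at hj

lemma notMem_image_starIdx_iff {w : List Bool} {a b : ℕ} (hab : (a, b) ∈ Opairs (star w)) :
    (a, b) ∉ (Opairs w).image (fun ij => (starIdx w ij.1, starIdx w ij.2)) ↔
      ∃ j ∈ outerIdx (star w), a = j + 1 := by
  simp only [Opairs, mem_filter, mem_product, mem_range] at hab
  obtain ⟨⟨ha, hb⟩, hlt, hfa, htb⟩ := hab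
  simp only [mem_image, Prod.mk.injEq, Prod.exists, not_exists, not_and]
  constructor
  · intro hnot
    rcases eq_starIdx_or_eq_starIdx_add_one ha with ⟨i, rfl⟩ | ⟨i, hi, rfl⟩
    · exfalso
      rcases eq_starIdx_or_eq_starIdx_add_one hb with ⟨j, rfl⟩ | ⟨j, hj, rfl⟩
      · rw [getElem?_star_starIdx] at hfa htb
        refine hnot i j ?_ rfl rfl
        simp only [Opairs, mem_filter, mem_product, mem_range]
        exact ⟨⟨lt_length_of_getElem?_eq_some hfa, lt_length_of_getElem?_eq_some htb⟩,
          (starIdx_strictMono w).lt_iff_lt.1 hlt, hfa, htb⟩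
      · simp [getElem?_star_starIdx_add_one hj] at htb
    · refine ⟨starIdx w i, mem_outerIdx_of_rugged (rugged_star w) ?_, rfl⟩
      rwa [getElem?_star_starIdx]
  · rintro ⟨j, hj, rfl⟩ i _ _ hi _
    exact starIdx_ne_add_one_of_getElem?_star (mem_outerIdx.1 hj).1 hi

end Star

section OuterVertices

variable {M n : ℕ} {v : List Bool}

lemma sub_le_diagDist_of_lineHitsV {px py : ℤ} {i : ℕ} (h : lineHitsV M n v px py i) :
    M * py - n * px ≤ diagDist M n v i := by
  obtain ⟨hi, y, -, hy, hline⟩ := h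
  have hy' : (M : ℝ) * y ≤ M * (ptY v i + 1) := mul_le_mul_of_nonneg_left hy M.cast_nonneg
  have hreal : (M : ℝ) * py - n * px ≤ M * (ptY v i + 1) - n * ptX v i := by linarith
  rw [diagDist, ptX_succ_of_true hi, ptY_succ_of_true hi]
  exact_mod_cast hreal

lemma eq_of_diagDist_eq (hcount : v.count false ≤ M) (hcop : Nat.Coprime M n) {i j : ℕ}
    (hi : v[i + 1]? = some false) (hj : v[j + 1]? = some false)
    (h : diagDist M n v i = diagDist M n v j) : i = j := by
  simp only [diagDist] at h
  have hxi := ptX_add_one_le_count hi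
  have hxj := ptX_add_one_le_count hj
  have hxi₀ : 0 ≤ ptX v (i + 1) := Int.natCast_nonneg _
  have hxj₀ : 0 ≤ ptX v (j + 1) := Int.natCast_nonneg _
  have hM : ((v.count false : ℕ) : ℤ) ≤ M := by exact_mod_cast hcount
  -- `M ∣ n Δx` and `|Δx| < M` force `Δx = 0`
  have hdvd : (M : ℤ) ∣ ptX v (i + 1) - ptX v (j + 1) :=
    (Nat.isCoprime_iff_coprime.2 hcop).dvd_of_dvd_mul_left
      ⟨ptY v (i + 1) - ptY v (j + 1), by linarith⟩
  have hx : ptX v (i + 1) = ptX v (j + 1) := by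
    have := Int.eq_zero_of_abs_lt_dvd hdvd (abs_lt.2 ⟨by omega, by omega⟩)
    omega
  have hy : ptY v (i + 1) = ptY v (j + 1) := by
    rw [hx] at h
    exact mul_left_cancel₀ (by omega : (M : ℤ) ≠ 0) (by linarith)
  have hsi := ptX_add_ptY (lt_length_of_getElem?_eq_some hi).le
  have hsj := ptX_add_ptY (lt_length_of_getElem?_eq_some hj).le
  omega

lemma k1_eq_zero_of_notMem_Vset (hv : Rugged v) (hcount : v.count false ≤ M)
    (hcop : Nat.Coprime M n) {j : ℕ} (hj : j ∈ outerIdx v) (hjV : j ∉ Vset M n v) :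
    k1 M n v j = 0 := by
  have hmax : ∀ i ∈ outerIdx v, diagDist M n v i ≤ diagDist M n v j := by
    simpa [Vset, hj] using hjV
  rw [k1, card_eq_zero, filter_eq_empty_iff]
  rintro i - ⟨hji, hhit⟩
  have hi := mem_outerIdx_of_rugged hv hhit.1
  have := eq_of_diagDist_eq hcount hcop (mem_outerIdx.1 hi).2 (mem_outerIdx.1 hj).2
    (le_antisymm (hmax i hi) (sub_le_diagDist_of_lineHitsV hhit))
  omega

lemma sum_Vset_k1 (hv : Rugged v) (hcount : v.count false ≤ M) (hcop : Nat.Coprime M n) :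
    ∑ j ∈ Vset M n v, k1 M n v j = ∑ j ∈ outerIdx v, k1 M n v j :=
  sum_filter_of_ne fun _ hj hk => by_contra fun hjV =>
    hk (k1_eq_zero_of_notMem_Vset hv hcount hcop hj fun h => hjV (mem_filter.1 h).2)

lemma card_H1pairs_filter_eq_sum_k1 (M n : ℕ) (v : List Bool) :
    ((H1pairs M n v).filter (fun ab => ∃ j ∈ outerIdx v, ab.1 = j + 1)).card =
      ∑ j ∈ outerIdx v, k1 M n v j := by
  have hset : (H1pairs M n v).filter (fun ab => ∃ j ∈ outerIdx v, ab.1 = j + 1) =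
      (outerIdx v).biUnion fun j => ((range v.length).filter fun i =>
        j < i ∧ lineHitsV M n v (ptX v (j + 1)) (ptY v (j + 1)) i).image (Prod.mk (j + 1)) := by
    ext ⟨a, b⟩
    simp only [H1pairs, Opairs, mem_filter, mem_product, mem_range, mem_biUnion, mem_image,
      Prod.mk.injEq]
    constructor
    · rintro ⟨⟨⟨⟨-, hb⟩, hab, -, htb⟩, hcond⟩, j, hj, rfl⟩
      exact ⟨j, hj, b, ⟨hb, by omega, htb, hcond⟩, rfl, rfl⟩
    · rintro ⟨j, hj, b, ⟨hb, hjb, htb, hcond⟩, rfl, rfl⟩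
      have hfj := (mem_outerIdx.1 hj).2
      have hne : j + 1 ≠ b := by rintro rfl; simp [hfj] at htb
      exact ⟨⟨⟨⟨lt_length_of_getElem?_eq_some hfj, hb⟩, by omega, hfj, htb⟩, hcond⟩, j, hj, rfl⟩
  rw [hset, card_biUnion]
  · exact sum_congr rfl fun j _ => card_image_of_injective _ (Prod.mk_right_injective _)
  · intro j _ j' _ hjj'
    simp only [Function.onFun, disjoint_left, mem_image]
    rintro _ ⟨_, -, rfl⟩ ⟨_, -, h⟩
    exact hjj' (by simp at h; omega)

end OuterVertices

theorem statement14_general (m n : ℕ) (h : Nat.Coprime m n)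
    (w : List Bool) (hw : IsDyck m n w) :
    ∑ p ∈ Vset (m + n) n (star w), k1 (m + n) n (star w) p =
      ((H1pairs (m + n) n (star w)) \
        ((Opairs w).image (fun ij => (starIdx w ij.1, starIdx w ij.2)))).card := by
  have hcount : (star w).count false ≤ m + n := by rw [count_false_star, hw.1, hw.2.1]
  rw [sum_Vset_k1 (rugged_star w) hcount (Nat.coprime_add_self_left.2 h),
    ← card_H1pairs_filter_eq_sum_k1, sdiff_eq_filter]
  congr 1
  exact filter_congr fun ab hab => (notMem_image_starIdx_iff (filter_subset _ _ hab)).symm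

/-- `Σ_{p ∈ V(γ*)} k₁(p) = |H₁(γ*) \ ι(O(γ))|`. -/
theorem statement14 (m n : ℕ) (hm : 0 < m) (hn : 0 < n) (h : Nat.Coprime m n)
    (w : List Bool) (hw : IsDyck m n w) :
    ∑ p ∈ Vset (m + n) n (star w), k1 (m + n) n (star w) p =
      ((H1pairs (m + n) n (star w)) \
        ((Opairs w).image (fun ij => (starIdx w ij.1, starIdx w ij.2)))).card :=
  statement14_general m n h w hw
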